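/- For the ℂ³/ℤ₃ quiver: let A be the path algebra (over ℂ) of the quiver with three vertices v₀, v₁, v₂ and arrows aᵢ: v₁ → v₀, bᵢ: v₂ → v₁, cᵢ: v₀ → v₂ (i = 0,1,2), modulo the relations aᵢbⱼ = aⱼbᵢ, bᵢcⱼ = bⱼcᵢ, cᵢaⱼ = cⱼaᵢ for all i,j. Then the center Z(A) is isomorphic to the subring of A spanned by diagonal elements diag(r,r,r), and Z(A) is generated as a ℂ-algebra by the elements xᵢⱼₖ = aᵢbⱼcₖ + bⱼcₖaᵢ + cₖaᵢbⱼ for i ≤ j ≤ k, with Z(A) isomorphic to the ℤ₃-invariant subring of ℂ[u₀,u₁,u₂] via xᵢⱼₖ ↦ uᵢuⱼuₖ. -/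

import Mathlib

open MvPolynomial

namespace Stmt12

/-- Generators of the `ℂ³/ℤ₃` quiver path algebra: three trivial paths `e₀,e₁,e₂` and three
groups of three arrows `aᵢ : v₁ → v₀`, `bᵢ : v₂ → v₁`, `cᵢ : v₀ → v₂`. -/
abbrev Gen := Fin 3 ⊕ Fin 3 ⊕ Fin 3 ⊕ Fin 3

abbrev F := FreeAlgebra ℂ Gen

def e (i : Fin 3) : F := FreeAlgebra.ι ℂ (Sum.inl i)
def a (i : Fin 3) : F := FreeAlgebra.ι ℂ (Sum.inr (Sum.inl i))
def b (i : Fin 3) : F := FreeAlgebra.ι ℂ (Sum.inr (Sum.inr (Sum.inl i)))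
def c (i : Fin 3) : F := FreeAlgebra.ι ℂ (Sum.inr (Sum.inr (Sum.inr i)))

/-- The path-algebra relations: the `eᵢ` are orthogonal idempotents summing to `1`, the
arrows compose only head-to-tail (`aᵢ = e₀aᵢe₁`, `bᵢ = e₁bᵢe₂`, `cᵢ = e₂cᵢe₀`), together
with the superpotential relations `aᵢbⱼ = aⱼbᵢ`, `bᵢcⱼ = bⱼcᵢ`, `cᵢaⱼ = cⱼaᵢ`. -/
inductive PathRel : F → F → Prop
  | ee (i j : Fin 3) : PathRel (e i * e j) (if i = j then e i else 0)
  | unit : PathRel (e 0 + e 1 + e 2) 1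
  | pa (i : Fin 3) : PathRel (a i) (e 0 * a i * e 1)
  | pb (i : Fin 3) : PathRel (b i) (e 1 * b i * e 2)
  | pc (i : Fin 3) : PathRel (c i) (e 2 * c i * e 0)
  | ab (i j : Fin 3) : PathRel (a i * b j) (a j * b i)
  | bc (i j : Fin 3) : PathRel (b i * c j) (b j * c i)
  | ca (i j : Fin 3) : PathRel (c i * a j) (c j * a i)

/-- The quiver algebra `A` for `ℂ³/ℤ₃`. -/
abbrev A := RingQuot PathRel

noncomputable def aa (i : Fin 3) : A := RingQuot.mkAlgHom ℂ PathRel (a i)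
noncomputable def bb (i : Fin 3) : A := RingQuot.mkAlgHom ℂ PathRel (b i)
noncomputable def cc (i : Fin 3) : A := RingQuot.mkAlgHom ℂ PathRel (c i)

/-- `xᵢⱼₖ = aᵢbⱼcₖ + bⱼcₖaᵢ + cₖaᵢbⱼ`, the closed loop `diag(r,r,r)` around the quiver. -/
noncomputable def x (i j k : Fin 3) : A :=
  aa i * bb j * cc k + bb j * cc k * aa i + cc k * aa i * bb j

end Stmt12

/-!
Send `eₚ ↦ Eₚₚ` and the arrows with label `i` to `uᵢE₀₁`, `uᵢE₁₂`, `uᵢE₂₀` in the `3 × 3`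
matrices over `ℂ[u₀,u₁,u₂]`. This representation is faithful: the commutation relations make
every path depend only on its starting vertex `p` and the multiset `s` of its labels, these paths
span `A`, and they go to the linearly independent matrices `u^s E_{p, p+|s|}`. A central element
commutes with the `Eₚₚ` and with `u₀E₀₁`, `u₀E₁₂`, so its image is a scalar matrix `f • 1`, and
the grading `|s| ≡ q - p (mod 3)` of the entries forces every monomial of `f` to have degree
divisible by `3`. Such an `f` is a polynomial in the cubic monomials `uᵢuⱼuₖ`, the images of
the `xᵢⱼₖ`.
-/

theorem Submodule.span_range_eq_top_of_mul_mem {R A ι : Type*} [CommSemiring R] [Semiring A]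
    [Algebra R A] {s : Set A} (hs : Algebra.adjoin R s = ⊤) {v : ι → A}
    (hone : 1 ∈ span R (Set.range v)) (hmul : ∀ g ∈ s, ∀ i, g * v i ∈ span R (Set.range v)) :
    span R (Set.range v) = ⊤ := by
  have hstable (g : A) (hg : g ∈ s) :
      span R (Set.range v) ≤ (span R (Set.range v)).comap (LinearMap.mulLeft R g) :=
    span_le.mpr <| Set.range_subset_iff.mpr (hmul g hg)
  have hleft (w : A) : ∀ y ∈ span R (Set.range v), w * y ∈ span R (Set.range v) := by
    have hw : w ∈ Algebra.adjoin R s := hs ▸ Algebra.mem_top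
    induction hw using Algebra.adjoin_induction with
    | mem g hg => exact hstable g hg
    | algebraMap r => intro y hy; rw [← Algebra.smul_def]; exact smul_mem _ r hy
    | add u w _ _ hu hw => intro y hy; rw [add_mul]; exact add_mem (hu y hy) (hw y hy)
    | mul u w _ _ hu hw => intro y hy; rw [mul_assoc]; exact hu _ (hw y hy)
  exact eq_top_iff.mpr fun w _ => mul_one w ▸ hleft w 1 hone

theorem RingQuot.adjoin_range_mkAlgHom_ι {R X : Type*} [CommSemiring R]
    (r : FreeAlgebra R X → FreeAlgebra R X → Prop) :
    Algebra.adjoin R (Set.range fun g => mkAlgHom R r (FreeAlgebra.ι R g)) = ⊤ := by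
  rw [Set.range_comp', ← AlgHom.map_adjoin, FreeAlgebra.adjoin_range_ι, Algebra.map_top,
    AlgHom.range_eq_top]
  exact mkAlgHom_surjective R r

theorem Subalgebra.mem_center_of_injective {R A B : Type*} [CommSemiring R] [Semiring A]
    [Semiring B] [Algebra R A] [Algebra R B] {f : A →ₐ[R] B} (hf : Function.Injective f) {z : A}
    (hz : f z ∈ center R B) : z ∈ center R A :=
  mem_center_iff.mpr fun w => hf <| by rw [map_mul, map_mul, mem_center_iff.mp hz]

namespace Matrix

variable {n R : Type*} [Fintype n] [DecidableEq n]

theorem apply_eq_zero_of_commute_single_self [Semiring R] {M : Matrix n n R} {p q : n}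
    (h : Commute (single q q 1) M) (hpq : p ≠ q) : M p q = 0 := by
  have := congrFun (congrFun h.eq p) q
  rwa [single_mul_apply_of_ne _ _ _ _ _ hpq, mul_single_apply_same, mul_one, eq_comm] at this

theorem apply_eq_apply_of_commute_single [CommRing R] [IsDomain R] {M : Matrix n n R} {p q : n} {r : R}
    (hr : r ≠ 0) (h : Commute (single p q r) M) : M p p = M q q := by
  have := congrFun (congrFun h.eq p) q
  rw [single_mul_apply_same, mul_single_apply_same, mul_comm] at this
  exact (mul_right_cancel₀ hr this).symm

end Matrix

namespace MvPolynomial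

variable {σ R : Type*} [CommSemiring R]

theorem prod_map_X_eq_monomial_toFinsupp [DecidableEq σ] (s : Multiset σ) :
    (s.map X).prod = (monomial (Multiset.toFinsupp s) 1 : MvPolynomial σ R) := by
  induction s using Multiset.induction with
  | empty => simp
  | cons i s ih =>
    rw [Multiset.map_cons, Multiset.prod_cons, ih, ← Multiset.singleton_add,
      Multiset.toFinsupp_add, Multiset.toFinsupp_singleton, monomial_single_add, pow_one]

variable [LinearOrder σ]

def sortedCubics : Set (MvPolynomial σ R) :=
  {f | ∃ i j k, i ≤ j ∧ j ≤ k ∧ f = X i * X j * X k}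

theorem prod_map_X_mem_adjoin_sortedCubics :
    ∀ l : List σ, l.Pairwise (· ≤ ·) → 3 ∣ l.length →
      (l.map X).prod ∈ Algebra.adjoin R (sortedCubics : Set (MvPolynomial σ R))
  | [], _, _ => one_mem _
  | [_], _, h | [_, _], _, h => by simp at h
  | i :: j :: k :: l, hl, h => by
    simp only [List.pairwise_cons, List.mem_cons, forall_eq_or_imp] at hl
    have hl' := prod_map_X_mem_adjoin_sortedCubics l hl.2.2.2 (by simp at h; omega)
    rw [List.map_cons, List.map_cons, List.map_cons, List.prod_cons, List.prod_cons,
      List.prod_cons, ← mul_assoc, ← mul_assoc]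
    exact mul_mem (Algebra.subset_adjoin ⟨i, j, k, hl.1.1, hl.2.1.1, rfl⟩) hl'

theorem mem_adjoin_sortedCubics_of_three_dvd_degree {f : MvPolynomial σ R}
    (hf : ∀ m ∈ f.support, 3 ∣ m.degree) : f ∈ Algebra.adjoin R sortedCubics := by
  classical
  rw [f.as_sum]
  refine sum_mem fun m hm => ?_
  have hmono : monomial m (1 : R) ∈ Algebra.adjoin R sortedCubics := by
    have hsort := Multiset.sort_eq (Finsupp.toMultiset m) (· ≤ ·)
    rw [← Finsupp.toMultiset_toFinsupp m, ← prod_map_X_eq_monomial_toFinsupp, ← hsort,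
      Multiset.map_coe, Multiset.prod_coe]
    refine prod_map_X_mem_adjoin_sortedCubics _ (Multiset.pairwise_sort _ _) ?_
    rw [Multiset.length_sort, Finsupp.card_toMultiset]
    exact hf m hm
  simpa [smul_monomial] using Subalgebra.smul_mem _ hmono (coeff m f)

end MvPolynomial

namespace Stmt12

open Matrix Fin.NatCast Fin.CommRing

abbrev R := MvPolynomial (Fin 3) ℂ
abbrev M3 := Matrix (Fin 3) (Fin 3) R

noncomputable def ee (p : Fin 3) : A := RingQuot.mkAlgHom ℂ PathRel (e p)

-- `aᵢ, bᵢ, cᵢ` indexed by the vertex they start from when paths are read left to right.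
noncomputable def arr (p : Fin 3) : Fin 3 → A := ![aa, bb, cc] p

theorem ee_mul_ee (p q : Fin 3) : ee p * ee q = if p = q then ee p else 0 := by
  simpa [ee, apply_ite] using RingQuot.mkAlgHom_rel ℂ (PathRel.ee p q)

theorem sum_ee : ee 0 + ee 1 + ee 2 = 1 := by
  simpa [ee] using RingQuot.mkAlgHom_rel ℂ PathRel.unit

theorem arr_eq_ee_mul_arr_mul_ee (p i : Fin 3) : arr p i = ee p * arr p i * ee (p + 1) := by
  fin_cases p
  · simpa [arr, aa, bb, cc, ee] using RingQuot.mkAlgHom_rel ℂ (PathRel.pa i)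
  · simpa [arr, aa, bb, cc, ee] using RingQuot.mkAlgHom_rel ℂ (PathRel.pb i)
  · simpa [arr, aa, bb, cc, ee] using RingQuot.mkAlgHom_rel ℂ (PathRel.pc i)

theorem arr_mul_arr_comm (p i j : Fin 3) :
    arr p i * arr (p + 1) j = arr p j * arr (p + 1) i := by
  fin_cases p
  · simpa [arr, aa, bb, cc, ee] using RingQuot.mkAlgHom_rel ℂ (PathRel.ab i j)
  · simpa [arr, aa, bb, cc, ee] using RingQuot.mkAlgHom_rel ℂ (PathRel.bc i j)
  · simpa [arr, aa, bb, cc, ee] using RingQuot.mkAlgHom_rel ℂ (PathRel.ca i j)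

theorem ee_mul_arr (q p i : Fin 3) : ee q * arr p i = if q = p then arr p i else 0 := by
  conv_lhs => rw [arr_eq_ee_mul_arr_mul_ee, ← mul_assoc, ← mul_assoc, ee_mul_ee]
  rcases eq_or_ne q p with rfl | h
  · rw [if_pos rfl, if_pos rfl, ← arr_eq_ee_mul_arr_mul_ee]
  · rw [if_neg h, if_neg h, zero_mul, zero_mul]

theorem arr_mul_ee (p i q : Fin 3) : arr p i * ee q = if q = p + 1 then arr p i else 0 := by
  conv_lhs => rw [arr_eq_ee_mul_arr_mul_ee, mul_assoc, ee_mul_ee]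
  rcases eq_or_ne q (p + 1) with rfl | h
  · rw [if_pos rfl, if_pos rfl, ← arr_eq_ee_mul_arr_mul_ee]
  · rw [if_neg h.symm, if_neg h, mul_zero]

noncomputable def path : Fin 3 → List (Fin 3) → A
  | p, [] => ee p
  | p, i :: L => arr p i * path (p + 1) L

theorem ee_mul_path (q p : Fin 3) (L : List (Fin 3)) :
    ee q * path p L = if q = p then path p L else 0 := by
  cases L with
  | nil => rw [path, ee_mul_ee]; split_ifs with h <;> simp only [h]
  | cons i L => rw [path, ← mul_assoc, ee_mul_arr, ite_mul, zero_mul]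

theorem arr_mul_path (q i p : Fin 3) (L : List (Fin 3)) :
    arr q i * path p L = if p = q + 1 then path q (i :: L) else 0 := by
  split_ifs with h
  · rw [h, path]
  · have hL : path p L = ee p * path p L := by rw [ee_mul_path, if_pos rfl]
    rw [hL, ← mul_assoc, arr_mul_ee, if_neg h, zero_mul]

theorem path_perm (p : Fin 3) {L L' : List (Fin 3)} (h : L.Perm L') : path p L = path p L' := by
  induction h generalizing p with
  | nil => rfl
  | cons i _ ih => rw [path, path, ih]
  | swap i j L => rw [path, path, path, path, ← mul_assoc, ← mul_assoc, arr_mul_arr_comm]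
  | trans _ _ ih₁ ih₂ => rw [ih₁, ih₂]

noncomputable def mpath (t : Fin 3 × Multiset (Fin 3)) : A :=
  Quotient.lift (path t.1) (fun _ _ => path_perm t.1) t.2

theorem mpath_coe (p : Fin 3) (L : List (Fin 3)) : mpath (p, L) = path p L := rfl

theorem ee_mul_mpath (q p : Fin 3) (s : Multiset (Fin 3)) :
    ee q * mpath (p, s) = if q = p then mpath (p, s) else 0 := by
  induction s using Quotient.inductionOn
  exact ee_mul_path q p _

theorem arr_mul_mpath (q i p : Fin 3) (s : Multiset (Fin 3)) :
    arr q i * mpath (p, s) = if p = q + 1 then mpath (q, i ::ₘ s) else 0 := by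
  induction s using Quotient.inductionOn
  exact arr_mul_path q i p _

theorem mkAlgHom_ι_eq_ee_or_arr (g : Gen) :
    (∃ q, RingQuot.mkAlgHom ℂ PathRel (FreeAlgebra.ι ℂ g) = ee q) ∨
      ∃ q i, RingQuot.mkAlgHom ℂ PathRel (FreeAlgebra.ι ℂ g) = arr q i := by
  rcases g with q | i | i | i
  exacts [.inl ⟨q, rfl⟩, .inr ⟨0, i, rfl⟩, .inr ⟨1, i, rfl⟩, .inr ⟨2, i, rfl⟩]

theorem span_mpath_eq_top : Submodule.span ℂ (Set.range mpath) = ⊤ := by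
  have hmem (t) : mpath t ∈ Submodule.span ℂ (Set.range mpath) := Submodule.subset_span ⟨t, rfl⟩
  refine Submodule.span_range_eq_top_of_mul_mem (RingQuot.adjoin_range_mkAlgHom_ι PathRel) ?_ ?_
  · rw [← sum_ee]
    exact add_mem (add_mem (hmem (0, 0)) (hmem (1, 0))) (hmem (2, 0))
  · rintro _ ⟨g, rfl⟩ ⟨p, s⟩
    dsimp only
    rcases mkAlgHom_ι_eq_ee_or_arr g with ⟨q, hq⟩ | ⟨q, i, hq⟩ <;> rw [hq]
    · rw [ee_mul_mpath]; split_ifs <;> simp [hmem]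
    · rw [arr_mul_mpath]; split_ifs <;> simp [hmem]

noncomputable def genMatrix : Gen → M3
  | .inl p => single p p 1
  | .inr (.inl i) => single 0 1 (X i)
  | .inr (.inr (.inl i)) => single 1 2 (X i)
  | .inr (.inr (.inr i)) => single 2 0 (X i)

theorem lift_genMatrix_rel ⦃u v : F⦄ (h : PathRel u v) :
    FreeAlgebra.lift ℂ genMatrix u = FreeAlgebra.lift ℂ genMatrix v := by
  induction h with
  | ee i j =>
    rcases eq_or_ne i j with rfl | h
    · simp [e, genMatrix]
    · simp [e, genMatrix, h, single_mul_single_of_ne _ _ _ _ h]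
  | unit =>
    ext p q
    fin_cases p <;> fin_cases q <;> simp [e, genMatrix, one_apply]
  | pa | pb | pc => simp [e, a, b, c, genMatrix]
  | ab | bc | ca => simp [a, b, c, genMatrix, mul_comm]

noncomputable def rep : A →ₐ[ℂ] M3 :=
  RingQuot.liftAlgHom ℂ ⟨FreeAlgebra.lift ℂ genMatrix, lift_genMatrix_rel⟩

theorem rep_ee (p : Fin 3) : rep (ee p) = single p p 1 := by
  simp [rep, ee, e, genMatrix]

theorem rep_arr (p i : Fin 3) : rep (arr p i) = single p (p + 1) (X i) := by
  fin_cases p <;> simp [rep, arr, aa, bb, cc, a, b, c, genMatrix]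

theorem rep_path (p : Fin 3) (L : List (Fin 3)) :
    rep (path p L) = single p (p + L.length) (L.map X).prod := by
  induction L generalizing p with
  | nil => simp [path, rep_ee]
  | cons i L ih =>
    rw [path, map_mul, rep_arr, ih, single_mul_single_same, List.map_cons, List.prod_cons,
      List.length_cons, Nat.cast_succ, add_comm (L.length : Fin 3), add_assoc]

theorem rep_mpath (p : Fin 3) (s : Multiset (Fin 3)) :
    rep (mpath (p, s)) = single p (p + Multiset.card s) (monomial (Multiset.toFinsupp s) 1) := by
  obtain ⟨L, rfl⟩ : ∃ L : List (Fin 3), (L : Multiset (Fin 3)) = s := Quotient.exists_rep s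
  rw [mpath_coe, rep_path, ← prod_map_X_eq_monomial_toFinsupp, Multiset.map_coe,
    Multiset.prod_coe, Multiset.coe_card]

noncomputable def pathIndex (t : Fin 3 × Multiset (Fin 3)) : Fin 3 × Fin 3 × (Fin 3 →₀ ℕ) :=
  (t.1, t.1 + Multiset.card t.2, Multiset.toFinsupp t.2)

theorem pathIndex_injective : Function.Injective pathIndex := by
  rintro ⟨p, s⟩ ⟨p', s'⟩ h
  simp only [pathIndex, Prod.mk.injEq] at h
  rw [h.1, Multiset.toFinsupp.injective h.2.2]

noncomputable abbrev matrixBasis : Module.Basis (Fin 3 × Fin 3 × (Fin 3 →₀ ℕ)) ℂ M3 :=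
  (basisMonomials (Fin 3) ℂ).matrix (Fin 3) (Fin 3)

theorem matrixBasis_repr_apply (M : M3) (p q : Fin 3) (m : Fin 3 →₀ ℕ) :
    matrixBasis.repr M (p, q, m) = coeff m (M p q) := by
  rw [matrixBasis, Module.Basis.matrix, Module.Basis.map_repr, LinearEquiv.trans_apply,
    Module.Basis.repr_reindex_apply, Pi.basis_repr, Pi.basis_repr]
  rfl

theorem rep_comp_mpath : rep ∘ mpath = matrixBasis ∘ pathIndex := by
  funext ⟨p, s⟩
  simp [rep_mpath, pathIndex]

theorem rep_injective : Function.Injective rep :=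
  LinearMap.injective_of_linearIndependent (f := rep.toLinearMap) span_mpath_eq_top <| by
    rw [AlgHom.coe_toLinearMap, rep_comp_mpath]
    exact matrixBasis.linearIndependent.comp _ pathIndex_injective

theorem coeff_rep_eq_zero (z : A) {p q : Fin 3} {m : Fin 3 →₀ ℕ}
    (h : q ≠ p + m.degree) : coeff m (rep z p q) = 0 := by
  have hz : rep z ∈ Submodule.span ℂ (matrixBasis '' Set.range pathIndex) := by
    rw [← Set.range_comp, ← rep_comp_mpath, Set.range_comp, ← AlgHom.coe_toLinearMap,
      ← Submodule.map_span, span_mpath_eq_top, Submodule.map_top]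
    exact LinearMap.mem_range_self _ z
  by_contra hm
  obtain ⟨⟨p', s⟩, hs⟩ := matrixBasis.mem_span_image.mp hz <| Finsupp.mem_support_iff.mpr <|
    (matrixBasis_repr_apply (rep z) p q m).trans_ne hm
  simp only [pathIndex, Prod.mk.injEq] at hs
  obtain ⟨rfl, rfl, rfl⟩ := hs
  exact h (by rw [← Multiset.toFinsupp_sum_eq]; rfl)

theorem rep_eq_algebraMap_of_mem_center {z : A} (hz : z ∈ Subalgebra.center ℂ A) :
    rep z = algebraMap R M3 (rep z 0 0) := by
  have hcomm (w : A) : Commute (rep w) (rep z) :=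
    (show Commute w z from Subalgebra.mem_center_iff.mp hz w).map rep
  have hoff {p q : Fin 3} (h : p ≠ q) : rep z p q = 0 :=
    apply_eq_zero_of_commute_single_self (by rw [← rep_ee]; exact hcomm _) h
  have hstep (p : Fin 3) : rep z p p = rep z (p + 1) (p + 1) :=
    apply_eq_apply_of_commute_single (X_ne_zero 0) (by rw [← rep_arr]; exact hcomm _)
  have hdiag (p : Fin 3) : rep z p p = rep z 0 0 := by
    fin_cases p
    exacts [rfl, (hstep 0).symm, ((hstep 0).trans (hstep 1)).symm]
  refine Matrix.ext fun p q => ?_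
  rw [algebraMap_matrix_apply, Algebra.algebraMap_self_apply]
  split_ifs with h
  · rw [h, hdiag]
  · exact hoff h

theorem rep_x (i j k : Fin 3) : rep (x i j k) = algebraMap R M3 (X i * X j * X k) := by
  refine Matrix.ext fun p q => ?_
  fin_cases p <;> fin_cases q <;>
    simp [x, rep, aa, bb, cc, a, b, c, genMatrix, algebraMap_matrix_apply] <;> ring

theorem x_mem_center (i j k : Fin 3) : x i j k ∈ Subalgebra.center ℂ A :=
  Subalgebra.mem_center_of_injective rep_injective <| by
    rw [rep_x]; exact Set.algebraMap_mem_center _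

noncomputable def centerHom : Subalgebra.center ℂ A →ₐ[ℂ] R :=
  AlgHom.ofLinearMap
    (entryLinearMap ℂ R 0 0 ∘ₗ rep.toLinearMap ∘ₗ (Subalgebra.center ℂ A).val.toLinearMap)
    (by simp)
    (fun z w => by
      simp only [LinearMap.comp_apply, AlgHom.toLinearMap_apply, Subalgebra.coe_val,
        map_mul, entryLinearMap_apply]
      conv_lhs => rw [rep_eq_algebraMap_of_mem_center z.2]
      rw [Algebra.algebraMap_eq_smul_one, smul_mul_assoc, one_mul, Matrix.smul_apply, smul_eq_mul])

theorem centerHom_apply (z : Subalgebra.center ℂ A) : centerHom z = rep z 0 0 := rfl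

theorem centerHom_injective : Function.Injective centerHom := fun z w h =>
  Subtype.ext <| rep_injective <| by
    rw [rep_eq_algebraMap_of_mem_center z.2, rep_eq_algebraMap_of_mem_center w.2]
    exact congrArg _ h

theorem centerHom_x (i j k : Fin 3) (h : x i j k ∈ Subalgebra.center ℂ A) :
    centerHom ⟨x i j k, h⟩ = X i * X j * X k := by
  rw [centerHom_apply, rep_x, algebraMap_matrix_apply, if_pos rfl,
    Algebra.algebraMap_self_apply]

theorem three_dvd_degree_of_mem_support_centerHom (z : Subalgebra.center ℂ A)
    {m : Fin 3 →₀ ℕ} (hm : m ∈ (centerHom z).support) : 3 ∣ m.degree := by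
  by_contra h
  refine (mem_support_iff.mp hm) (coeff_rep_eq_zero z fun h' => h ?_)
  rwa [zero_add, eq_comm, Fin.natCast_eq_zero] at h'

def sortedX : Set A := {z | ∃ i j k : Fin 3, i ≤ j ∧ j ≤ k ∧ z = x i j k}

theorem map_rep_adjoin_sortedX : (Algebra.adjoin ℂ sortedX).map rep =
    (Algebra.adjoin ℂ sortedCubics).map ((Algebra.ofId R M3).restrictScalars ℂ) := by
  rw [AlgHom.map_adjoin, AlgHom.map_adjoin]
  congr 1
  ext M
  simp [sortedX, sortedCubics, rep_x]

theorem exists_mem_adjoin_sortedX_rep_eq {f : R} (hf : ∀ m ∈ f.support, 3 ∣ m.degree) :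
    ∃ w ∈ Algebra.adjoin ℂ sortedX, rep w = algebraMap R M3 f := by
  have : algebraMap R M3 f ∈ (Algebra.adjoin ℂ sortedCubics).map
      ((Algebra.ofId R M3).restrictScalars ℂ) :=
    Subalgebra.mem_map.mpr ⟨f, mem_adjoin_sortedCubics_of_three_dvd_degree hf, rfl⟩
  rwa [← map_rep_adjoin_sortedX, Subalgebra.mem_map] at this

theorem adjoin_sortedX_le_center : Algebra.adjoin ℂ sortedX ≤ Subalgebra.center ℂ A :=
  Algebra.adjoin_le <| by rintro _ ⟨i, j, k, -, -, rfl⟩; exact x_mem_center i j k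

theorem center_eq_adjoin_sortedX : Subalgebra.center ℂ A = Algebra.adjoin ℂ sortedX := by
  refine le_antisymm (fun z hz => ?_) adjoin_sortedX_le_center
  obtain ⟨w, hw, hrep⟩ := exists_mem_adjoin_sortedX_rep_eq
    fun _ => three_dvd_degree_of_mem_support_centerHom ⟨z, hz⟩
  rwa [rep_injective (hrep.trans (rep_eq_algebraMap_of_mem_center hz).symm)] at hw

theorem range_centerHom :
    Set.range centerHom = {f : R | ∀ m ∈ f.support, 3 ∣ m.degree} := by
  refine Set.Subset.antisymm ?_ fun f hf => ?_
  · rintro _ ⟨z, rfl⟩ m hm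
    exact three_dvd_degree_of_mem_support_centerHom z hm
  · obtain ⟨w, hw, hrep⟩ := exists_mem_adjoin_sortedX_rep_eq hf
    refine ⟨⟨w, adjoin_sortedX_le_center hw⟩, ?_⟩
    rw [centerHom_apply, hrep, algebraMap_matrix_apply, if_pos rfl,
      Algebra.algebraMap_self_apply]

/-- the elements `xᵢⱼₖ` are central in `A`; the center `Z(A)` is generated as
a ℂ-algebra by the `xᵢⱼₖ` with `i ≤ j ≤ k`; and `Z(A)` is isomorphic to the
`ℤ₃`-invariant subring of `ℂ[u₀,u₁,u₂]` via `xᵢⱼₖ ↦ uᵢuⱼuₖ` (so `Spec Z(A) = ℂ³/ℤ₃`). -/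
theorem stmt_12 :
    (∀ i j k : Fin 3, x i j k ∈ Subalgebra.center ℂ A) ∧
    (Subalgebra.center ℂ A =
      Algebra.adjoin ℂ {z : A | ∃ i j k : Fin 3, i ≤ j ∧ j ≤ k ∧ z = x i j k}) ∧
    (∃ φ : Subalgebra.center ℂ A →ₐ[ℂ] MvPolynomial (Fin 3) ℂ,
      Function.Injective φ ∧
      (∀ (i j k : Fin 3) (h : x i j k ∈ Subalgebra.center ℂ A),
        φ ⟨x i j k, h⟩ = X i * X j * X k) ∧
      Set.range (fun z => φ z) =
        {p : MvPolynomial (Fin 3) ℂ | ∀ m ∈ p.support, (3 : ℕ) ∣ (m 0 + m 1 + m 2)}) := by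
  refine ⟨x_mem_center, center_eq_adjoin_sortedX, centerHom, centerHom_injective, centerHom_x, ?_⟩
  simp only [← Fin.sum_univ_three, ← Finsupp.degree_eq_sum]
  exact range_centerHom

end Stmt12
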